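/- arXiv:2007.14197 — 4 statements merged into one kernel-verified Lean document; each statement's English description precedes it below -/
import Mathlib

section
/- Every subgroup of (Z/nZ)^d of index k contains a subgroup isomorphic to (Z/mZ)^d for some positive divisor m of n satisfying m ≥ n/k. -/
/-- Every subgroup of `(ℤ/nℤ)^d` of index `k` contains a subgroup isomorphic to `(ℤ/mℤ)^d`
for some positive divisor `m` of `n` with `m ≥ n/k`. -/
theorem stmt2 (n d k : ℕ) (hn : 0 < n) (hd : 0 < d) (hk : 0 < k)
    (H : AddSubgroup (Fin d → ZMod n)) (hH : H.index = k) :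
    ∃ m : ℕ, 0 < m ∧ m ∣ n ∧ n ≤ m * k ∧
      ∃ H' : AddSubgroup (Fin d → ZMod n), H' ≤ H ∧
        Nonempty (H' ≃+ (Fin d → ZMod m)) := by
  set g : ℕ := Nat.gcd n k with hg
  have hgn : g ∣ n := Nat.gcd_dvd_left n k
  have hgk : g ∣ k := Nat.gcd_dvd_right n k
  have hgpos : 0 < g := Nat.gcd_pos_of_pos_left k hn
  set m : ℕ := n / g with hm
  have hmpos : 0 < m := Nat.div_pos (Nat.le_of_dvd hn hgn) hgpos
  have hmn : m ∣ n := Nat.div_dvd_of_dvd hgn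
  have hgm : g * m = n := Nat.mul_div_cancel' hgn
  have hle : n ≤ m * k := by
    obtain ⟨t, ht⟩ := hgk
    have htpos : 0 < t := by
      rcases Nat.eq_zero_or_pos t with rfl | h
      · simp at ht; omega
      · exact h
    calc n = m * g := by rw [mul_comm]; exact hgm.symm
    _ ≤ m * (g * t) := Nat.mul_le_mul_left m (Nat.le_mul_of_pos_right g htpos)
    _ = m * k := by rw [← ht]
  haveI : NeZero m := ⟨hmpos.ne'⟩
  haveI : NeZero n := ⟨hn.ne'⟩
  -- the basic hom ℤ →+ ZMod n, j ↦ g * j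
  set f : ℤ →+ ZMod n :=
    (Int.castAddHom (ZMod n)).comp (AddMonoidHom.mulLeft (g : ℤ)) with hf
  have hf0 : f (m : ℤ) = 0 := by
    simp only [hf, AddMonoidHom.coe_comp, Function.comp_apply, AddMonoidHom.coe_mulLeft,
      Int.coe_castAddHom]
    have h1 : ((g : ℤ)) * (m : ℤ) = (n : ℤ) := by exact_mod_cast hgm
    rw [h1]
    simp
  set ψ : ZMod m →+ ZMod n := ZMod.lift m ⟨f, hf0⟩ with hψ
  have hψ_apply : ∀ j : ℤ, ψ (j : ZMod m) = ((g * j : ℤ) : ZMod n) := by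
    intro j
    simp [hψ, hf]
  have hψinj : Function.Injective ψ := by
    rw [hψ, ZMod.lift_injective]
    intro j hj
    simp only [hf, AddMonoidHom.coe_comp, Function.comp_apply, AddMonoidHom.coe_mulLeft,
      Int.coe_castAddHom] at hj
    rw [ZMod.intCast_zmod_eq_zero_iff_dvd] at hj ⊢
    have hn' : (n : ℤ) = (g : ℤ) * (m : ℤ) := by exact_mod_cast hgm.symm
    rw [hn'] at hj
    exact (mul_dvd_mul_iff_left (by exact_mod_cast hgpos.ne' : (g : ℤ) ≠ 0)).mp hj
  -- componentwise hom
  set φ : (Fin d → ZMod m) →+ (Fin d → ZMod n) := AddMonoidHom.compLeft ψ (Fin d) with hφ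
  have hφ_apply : ∀ (y : Fin d → ZMod m) (i : Fin d), φ y i = ψ (y i) := fun _ _ => rfl
  have hφinj : Function.Injective φ := by
    intro a b hab
    funext i
    exact hψinj (congrFun hab i)
  refine ⟨m, hmpos, hmn, hle, φ.range, ?_, ⟨(AddMonoidHom.ofInjective hφinj).symm⟩⟩
  -- show φ.range ≤ H
  rintro x ⟨y, rfl⟩
  -- Bezout: g = n * a + k * b
  set a : ℤ := Nat.gcdA n k with ha
  set b : ℤ := Nat.gcdB n k with hb
  have hbezout : (g : ℤ) = n * a + k * b := Nat.gcd_eq_gcd_ab n k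
  have hcast : ((g : ℤ) : ZMod n) = ((k * b : ℤ) : ZMod n) := by
    rw [hbezout]
    push_cast
    simp
  set u : Fin d → ZMod n := fun i => ((b * ((y i).val : ℤ) : ℤ) : ZMod n) with hu
  have hxu : φ y = k • u := by
    funext i
    rw [hφ_apply]
    have hyi : ((((y i).val : ℤ)) : ZMod m) = y i := by
      push_cast
      simp [ZMod.natCast_val, ZMod.cast_id]
    rw [← hyi, hψ_apply]
    have : ((g * ((y i).val : ℤ) : ℤ) : ZMod n) = ((g : ℤ) : ZMod n) * (((y i).val : ℤ) : ZMod n) := by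
      push_cast; ring
    rw [this, hcast]
    simp only [Pi.smul_apply, hu]
    push_cast
    ring
  rw [hxu, ← hH]
  exact AddSubgroup.nsmul_index_mem H u
end

section
/- Let W be the hyperoctahedral group S_3 ⋉ (Z/2Z)^3 acting on the torus T = (C*)^3 by permutation of coordinates and inversion of individual coordinates, and let Γ be a finite subgroup of T invariant under the subgroup of W generated by coordinate permutations and the pairwise sign-inversions (t1,t2,t3) ↦ (t1^{-1}, t2^{-1}, t3) etc. Then there exists a positive integer n such that Γ is isomorphic to μ_n^3, or n is even and Γ ≅ μ_n^2 × μ_{n/2}, or n is even and Γ ≅ μ_n × μ_{n/2}^2. -/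
/-!
Let `m` be the exponent of `Γ`, so `Γ ≤ μ_m³`. Cyclic invariance makes every coordinate
projection of `Γ` equal to `μ_m`, and multiplying `t ∈ Γ` by its image `(t₁⁻¹, t₂⁻¹, t₃)`
gives `(1, 1, t₃²) ∈ Γ`; hence `Γ` contains the cube of the group of squares of `μ_m`.
For odd `m` the squares are all of `μ_m`. For even `m` they form `μ_{m/2}`, and `Γ` is the
preimage under `t ↦ t^{m/2}` of a cyclically invariant subgroup `V` of `μ₂³` whose first
projection is onto. There are three such `V`: all of `μ₂³`, the vectors of product one, and the
diagonal, giving `μ_m³`, `{t | t₁t₂t₃ ∈ μ_{m/2}} ≅ μ_m² × μ_{m/2}` and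
`{t | t₂/t₁, t₃/t₁ ∈ μ_{m/2}} ≅ μ_m × μ_{m/2}²`.
-/

/-- The three-dimensional torus `T = (ℂ*)³`. -/
abbrev T3 : Type := ℂˣ × ℂˣ × ℂˣ

/-- Abbreviation for the abstract group `μ_a × μ_b × μ_c`. -/
abbrev MZ (a b c : ℕ) : Type :=
  Multiplicative (ZMod a) × Multiplicative (ZMod b) × Multiplicative (ZMod c)

open Monoid

section Group

variable {G : Type*} [Group G]

def cube (K : Subgroup G) : Subgroup (G × G × G) := K.prod (K.prod K)

@[simp]
lemma mem_cube {K : Subgroup G} {t : G × G × G} :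
    t ∈ cube K ↔ t.1 ∈ K ∧ t.2.1 ∈ K ∧ t.2.2 ∈ K := Iff.rfl

def CyclicallyInvariant (Γ : Subgroup (G × G × G)) : Prop :=
  ∀ t ∈ Γ, (t.2.2, t.1, t.2.1) ∈ Γ

def cubeEquiv (K : Subgroup G) : cube K ≃* K × K × K :=
  (Subgroup.prodEquiv K (K.prod K)).trans
    (MulEquiv.prodCongr (MulEquiv.refl K) (Subgroup.prodEquiv K K))

variable {Γ : Subgroup (G × G × G)}

lemma cube_le_of_forall_mem (hcyc : CyclicallyInvariant Γ) {K : Subgroup G}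
    (hK : ∀ x ∈ K, ((x, 1, 1) : G × G × G) ∈ Γ) : cube K ≤ Γ := by
  rintro ⟨a, b, c⟩ ⟨ha, hb, hc⟩
  have hb' : ((1, b, 1) : G × G × G) ∈ Γ := hcyc _ (hK b hb)
  have hc' : ((1, 1, c) : G × G × G) ∈ Γ := hcyc _ (hcyc _ (hK c hc))
  simpa using mul_mem (mul_mem (hK a ha) hb') hc'

lemma sq_mk_one_one_mem (hcyc : CyclicallyInvariant Γ)
    (hA : ∀ t ∈ Γ, (t.1⁻¹, t.2.1⁻¹, t.2.2) ∈ Γ) {t : G × G × G} (ht : t ∈ Γ) :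
    ((t.1 ^ 2, 1, 1) : G × G × G) ∈ Γ := by
  have hs := hcyc _ (hcyc _ ht)
  simpa [sq] using hcyc _ (mul_mem hs (hA _ hs))

lemma exponent_dvd_exponent_map_fst (hcyc : CyclicallyInvariant Γ) :
    exponent Γ ∣ exponent (Γ.map (MonoidHom.fst G (G × G))) := by
  have hfst : ∀ s ∈ Γ, s.1 ∈ Γ.map (MonoidHom.fst G (G × G)) := fun s hs => ⟨s, hs, rfl⟩
  refine exponent_dvd_of_forall_pow_eq_one fun t => Subtype.ext (Prod.ext ?_ (Prod.ext ?_ ?_))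
  · exact Subgroup.pow_exponent_eq_one (hfst _ t.2)
  · exact Subgroup.pow_exponent_eq_one (hfst _ (hcyc _ (hcyc _ t.2)))
  · exact Subgroup.pow_exponent_eq_one (hfst _ (hcyc _ t.2))

end Group

section CommGroup

variable {A : Type*} [CommGroup A]

def cubeProdMem (K H : Subgroup A) : Subgroup (A × A × A) where
  carrier := {t | t ∈ cube K ∧ t.1 * t.2.1 * t.2.2 ∈ H}
  mul_mem' {s t} hs ht := ⟨mul_mem hs.1 ht.1, by
    convert mul_mem hs.2 ht.2 using 1
    simp only [Prod.fst_mul, Prod.snd_mul]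
    ac_rfl⟩
  one_mem' := ⟨one_mem _, by simp⟩
  inv_mem' {t} ht := ⟨inv_mem ht.1, by simpa [mul_comm] using inv_mem ht.2⟩

def cubeDiagMod (K H : Subgroup A) : Subgroup (A × A × A) where
  carrier := {t | t ∈ cube K ∧ t.2.1 / t.1 ∈ H ∧ t.2.2 / t.1 ∈ H}
  mul_mem' {s t} hs ht := ⟨mul_mem hs.1 ht.1,
    by simpa only [Prod.fst_mul, Prod.snd_mul, div_mul_div_comm] using mul_mem hs.2.1 ht.2.1,
    by simpa only [Prod.fst_mul, Prod.snd_mul, div_mul_div_comm] using mul_mem hs.2.2 ht.2.2⟩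
  one_mem' := ⟨one_mem _, by simp, by simp⟩
  inv_mem' {t} ht := ⟨inv_mem ht.1,
    by simpa only [Prod.fst_inv, Prod.snd_inv, inv_div_inv, inv_div] using inv_mem ht.2.1,
    by simpa only [Prod.fst_inv, Prod.snd_inv, inv_div_inv, inv_div] using inv_mem ht.2.2⟩

variable {K H : Subgroup A}

@[simp]
lemma mem_cubeProdMem {t : A × A × A} :
    t ∈ cubeProdMem K H ↔ t ∈ cube K ∧ t.1 * t.2.1 * t.2.2 ∈ H := Iff.rfl

@[simp]
lemma mem_cubeDiagMod {t : A × A × A} :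
    t ∈ cubeDiagMod K H ↔ t ∈ cube K ∧ t.2.1 / t.1 ∈ H ∧ t.2.2 / t.1 ∈ H := Iff.rfl

def cubeProdMemEquiv (hHK : H ≤ K) : cubeProdMem K H ≃* K × K × H where
  toFun t := (⟨t.1.1, t.2.1.1⟩, ⟨t.1.2.1, t.2.1.2.1⟩, ⟨t.1.1 * t.1.2.1 * t.1.2.2, t.2.2⟩)
  invFun s := ⟨(s.1, s.2.1, s.2.2 / ((s.1 : A) * s.2.1)),
    ⟨⟨s.1.2, s.2.1.2, K.div_mem (hHK s.2.2.2) (K.mul_mem s.1.2 s.2.1.2)⟩,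
      by simpa only [mul_div_cancel] using s.2.2.2⟩⟩
  left_inv t := by ext <;> simp
  right_inv s := by ext <;> simp
  map_mul' s t := by
    ext <;> simp only [Subgroup.coe_mul, Prod.fst_mul, Prod.snd_mul]
    ac_rfl

def cubeDiagModEquiv (hHK : H ≤ K) : cubeDiagMod K H ≃* K × H × H where
  toFun t := (⟨t.1.1, t.2.1.1⟩, ⟨t.1.2.1 / t.1.1, t.2.2.1⟩, ⟨t.1.2.2 / t.1.1, t.2.2.2⟩)
  invFun s := ⟨(s.1, s.2.1 * s.1, s.2.2 * s.1),
    ⟨⟨s.1.2, K.mul_mem (hHK s.2.1.2) s.1.2, K.mul_mem (hHK s.2.2.2) s.1.2⟩,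
      by simp [s.2.1.2], by simp [s.2.2.2]⟩⟩
  left_inv t := by ext <;> simp
  right_inv s := by ext <;> simp
  map_mul' s t := by ext <;> simp [div_mul_div_comm]

variable (n : ℕ)

lemma comap_powMonoidHom_cube :
    (cube K).comap (powMonoidHom n) = cube (K.comap (powMonoidHom n)) := by
  ext t; simp

lemma comap_powMonoidHom_cubeProdMem :
    (cubeProdMem K H).comap (powMonoidHom n) =
      cubeProdMem (K.comap (powMonoidHom n)) (H.comap (powMonoidHom n)) := by
  ext t; simp [mul_pow]

lemma comap_powMonoidHom_cubeDiagMod :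
    (cubeDiagMod K H).comap (powMonoidHom n) =
      cubeDiagMod (K.comap (powMonoidHom n)) (H.comap (powMonoidHom n)) := by
  ext t; simp [div_pow]

lemma CyclicallyInvariant.map_powMonoidHom {Γ : Subgroup (A × A × A)}
    (hcyc : CyclicallyInvariant Γ) : CyclicallyInvariant (Γ.map (powMonoidHom n)) := by
  rintro _ ⟨t, ht, rfl⟩
  exact ⟨_, hcyc t ht, rfl⟩

end CommGroup

section RootsOfUnity

lemma comap_powMonoidHom_rootsOfUnity (M : Type*) [CommMonoid M] (k n : ℕ) :
    (rootsOfUnity k M).comap (powMonoidHom n) = rootsOfUnity (n * k) M := by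
  ext x; simp [pow_mul]

lemma comap_powMonoidHom_bot (M : Type*) [CommMonoid M] (n : ℕ) :
    (⊥ : Subgroup Mˣ).comap (powMonoidHom n) = rootsOfUnity n M := by
  rw [MonoidHom.comap_bot, rootsOfUnity_eq_ker]

lemma exists_sq_eq_of_odd {M : Type*} [CommMonoid M] {n : ℕ} (hn : Odd n) {x : Mˣ}
    (hx : x ∈ rootsOfUnity n M) : ∃ a ∈ rootsOfUnity n M, a ^ 2 = x := by
  refine ⟨x ^ ((n + 1) / 2), pow_mem hx _, ?_⟩
  rw [mem_rootsOfUnity] at hx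
  rw [← pow_mul, Nat.div_mul_cancel hn.add_one.two_dvd, pow_succ, hx, one_mul]

noncomputable def rootsOfUnityEquivZMod (M : Type*) [CommMonoid M] (n : ℕ) [NeZero n]
    [HasEnoughRootsOfUnity M n] : rootsOfUnity n M ≃* Multiplicative (ZMod n) :=
  mulEquivOfCyclicCardEq (by rw [HasEnoughRootsOfUnity.natCard_rootsOfUnity]; simp)

lemma mem_rootsOfUnity_two_iff {R : Type*} [CommRing R] [NoZeroDivisors R] {x : Rˣ} :
    x ∈ rootsOfUnity 2 R ↔ x = 1 ∨ x = -1 := by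
  rw [mem_rootsOfUnity', sq_eq_one_iff, ← Units.val_one, ← Units.val_neg, Units.val_inj,
    Units.val_inj]

variable {K : Type*} [Field K] [IsAlgClosed K]

lemma Units.exists_pow_eq (y : Kˣ) {n : ℕ} (hn : n ≠ 0) : ∃ x : Kˣ, x ^ n = y := by
  obtain ⟨x, hx⟩ := IsAlgClosed.exists_pow_nat_eq (y : K) (Nat.pos_of_ne_zero hn)
  have hx0 : x ≠ 0 := by rintro rfl; simp [zero_pow hn] at hx; exact y.ne_zero hx.symm
  exact ⟨Units.mk0 x hx0, Units.ext (by simpa using hx)⟩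

lemma exists_sq_eq_of_mem_rootsOfUnity {n : ℕ} {x : Kˣ} (hx : x ∈ rootsOfUnity n K) :
    ∃ a ∈ rootsOfUnity (2 * n) K, a ^ 2 = x := by
  obtain ⟨a, rfl⟩ := Units.exists_pow_eq x two_ne_zero
  exact ⟨a, by rwa [mem_rootsOfUnity, pow_mul], rfl⟩

lemma exists_mem_rootsOfUnity_pow_eq_neg_one {n : ℕ} (hn : n ≠ 0) :
    ∃ x ∈ rootsOfUnity (2 * n) K, x ^ n = -1 := by
  obtain ⟨x, hx⟩ := Units.exists_pow_eq (-1 : Kˣ) hn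
  exact ⟨x, by rw [mem_rootsOfUnity, mul_comm, pow_mul, hx]; simp, hx⟩

end RootsOfUnity

section RootsOfUnityTwo

variable {R : Type*} [CommRing R] [NoZeroDivisors R]

lemma mem_cube_rootsOfUnity_two_iff {v : Rˣ × Rˣ × Rˣ} :
    v ∈ cube (rootsOfUnity 2 R) ↔
      (v.1 = 1 ∨ v.1 = -1) ∧ (v.2.1 = 1 ∨ v.2.1 = -1) ∧ (v.2.2 = 1 ∨ v.2.2 = -1) := by
  simp only [mem_cube, mem_rootsOfUnity_two_iff]

variable [CharZero R] {V : Subgroup (Rˣ × Rˣ × Rˣ)}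

lemma eq_cubeProdMem_rootsOfUnity_two (hV : V ≤ cube (rootsOfUnity 2 R))
    (hcyc : CyclicallyInvariant V) (h100 : ((-1, 1, 1) : Rˣ × Rˣ × Rˣ) ∉ V)
    (h110 : ((-1, -1, 1) : Rˣ × Rˣ × Rˣ) ∈ V) :
    V = cubeProdMem (rootsOfUnity 2 R) ⊥ := by
  have h010 : ((1, -1, 1) : Rˣ × Rˣ × Rˣ) ∉ V := fun h => h100 (hcyc _ (hcyc _ h))
  have h001 : ((1, 1, -1) : Rˣ × Rˣ × Rˣ) ∉ V := fun h => h100 (hcyc _ h)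
  have h111 : ((-1, -1, -1) : Rˣ × Rˣ × Rˣ) ∉ V := fun h => h001 (by simpa using mul_mem h h110)
  apply le_antisymm
  · rintro ⟨a, b, c⟩ hv
    refine ⟨hV hv, ?_⟩
    rcases mem_cube_rootsOfUnity_two_iff.1 (hV hv) with ⟨rfl | rfl, rfl | rfl, rfl | rfl⟩ <;>
      first
      | exact (h100 hv).elim
      | exact (h010 hv).elim
      | exact (h001 hv).elim
      | exact (h111 hv).elim
      | simp
  · rintro ⟨a, b, c⟩ hv
    rcases mem_cube_rootsOfUnity_two_iff.1 hv.1 with ⟨rfl | rfl, rfl | rfl, rfl | rfl⟩ <;>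
      first
      | exact one_mem V
      | exact h110
      | exact hcyc _ h110
      | exact hcyc _ (hcyc _ h110)
      | norm_num [Units.ext_iff] at hv

lemma eq_cubeDiagMod_rootsOfUnity_two (hV : V ≤ cube (rootsOfUnity 2 R))
    (hcyc : CyclicallyInvariant V) (h100 : ((-1, 1, 1) : Rˣ × Rˣ × Rˣ) ∉ V)
    (h110 : ((-1, -1, 1) : Rˣ × Rˣ × Rˣ) ∉ V)
    (hneg : ∃ v ∈ V, v.1 = -1) : V = cubeDiagMod (rootsOfUnity 2 R) ⊥ := by
  have h010 : ((1, -1, 1) : Rˣ × Rˣ × Rˣ) ∉ V := fun h => h100 (hcyc _ (hcyc _ h))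
  have h001 : ((1, 1, -1) : Rˣ × Rˣ × Rˣ) ∉ V := fun h => h100 (hcyc _ h)
  have h011 : ((1, -1, -1) : Rˣ × Rˣ × Rˣ) ∉ V := fun h => h110 (hcyc _ (hcyc _ h))
  have h101 : ((-1, 1, -1) : Rˣ × Rˣ × Rˣ) ∉ V := fun h => h110 (hcyc _ h)
  have h111 : ((-1, -1, -1) : Rˣ × Rˣ × Rˣ) ∈ V := by
    obtain ⟨⟨a, b, c⟩, hv, rfl⟩ := hneg
    rcases mem_cube_rootsOfUnity_two_iff.1 (hV hv) with ⟨-, rfl | rfl, rfl | rfl⟩ <;>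
      first
      | exact (h100 hv).elim
      | exact (h110 hv).elim
      | exact (h101 hv).elim
      | exact hv
  apply le_antisymm
  · rintro ⟨a, b, c⟩ hv
    refine ⟨hV hv, ?_⟩
    rcases mem_cube_rootsOfUnity_two_iff.1 (hV hv) with ⟨rfl | rfl, rfl | rfl, rfl | rfl⟩ <;>
      first
      | exact (h100 hv).elim
      | exact (h010 hv).elim
      | exact (h001 hv).elim
      | exact (h110 hv).elim
      | exact (h011 hv).elim
      | exact (h101 hv).elim
      | simp
  · rintro ⟨a, b, c⟩ hv
    rcases mem_cube_rootsOfUnity_two_iff.1 hv.1 with ⟨rfl | rfl, rfl | rfl, rfl | rfl⟩ <;>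
      first
      | exact one_mem V
      | exact h111
      | norm_num [Units.ext_iff] at hv

lemma eq_cube_or_eq_cubeProdMem_or_eq_cubeDiagMod_rootsOfUnity_two
    (hV : V ≤ cube (rootsOfUnity 2 R)) (hcyc : CyclicallyInvariant V) (hneg : ∃ v ∈ V, v.1 = -1) :
    V = cube (rootsOfUnity 2 R) ∨ V = cubeProdMem (rootsOfUnity 2 R) ⊥ ∨
      V = cubeDiagMod (rootsOfUnity 2 R) ⊥ := by
  by_cases h100 : ((-1, 1, 1) : Rˣ × Rˣ × Rˣ) ∈ V
  · refine Or.inl (le_antisymm hV (cube_le_of_forall_mem hcyc fun x hx => ?_))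
    rcases mem_rootsOfUnity_two_iff.1 hx with rfl | rfl
    exacts [one_mem V, h100]
  by_cases h110 : ((-1, -1, 1) : Rˣ × Rˣ × Rˣ) ∈ V
  · exact Or.inr (Or.inl (eq_cubeProdMem_rootsOfUnity_two hV hcyc h100 h110))
  · exact Or.inr (Or.inr (eq_cubeDiagMod_rootsOfUnity_two hV hcyc h100 h110 hneg))

end RootsOfUnityTwo

section Torus

variable {M : Type*} [CommMonoid M] {Γ : Subgroup (Mˣ × Mˣ × Mˣ)}

lemma le_cube_rootsOfUnity_exponent : Γ ≤ cube (rootsOfUnity (exponent Γ) M) := fun t ht => by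
  have h := Subgroup.pow_exponent_eq_one ht
  simp only [Prod.ext_iff, Prod.pow_fst, Prod.pow_snd, Prod.fst_one, Prod.snd_one] at h
  simpa [mem_rootsOfUnity] using h

lemma map_fst_eq_rootsOfUnity [Finite Γ] [HasEnoughRootsOfUnity M (exponent Γ)]
    (hcyc : CyclicallyInvariant Γ) :
    Γ.map (MonoidHom.fst _ _) = rootsOfUnity (exponent Γ) M := by
  have hle : Γ.map (MonoidHom.fst _ _) ≤ rootsOfUnity (exponent Γ) M :=
    Subgroup.map_le_iff_le_comap.2 fun t ht => (le_cube_rootsOfUnity_exponent ht).1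
  have : Finite (Γ.map (MonoidHom.fst _ _)) :=
    Finite.of_injective _ (Subgroup.inclusion_injective hle)
  refine Subgroup.eq_of_le_of_card_ge hle ?_
  rw [HasEnoughRootsOfUnity.natCard_rootsOfUnity]
  exact Nat.le_of_dvd Nat.card_pos
    ((exponent_dvd_exponent_map_fst hcyc).trans Group.exponent_dvd_nat_card)

lemma sq_mk_one_one_mem_of_mem_rootsOfUnity [Finite Γ] [HasEnoughRootsOfUnity M (exponent Γ)]
    (hcyc : CyclicallyInvariant Γ) (hA : ∀ t ∈ Γ, (t.1⁻¹, t.2.1⁻¹, t.2.2) ∈ Γ)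
    {a : Mˣ} (ha : a ∈ rootsOfUnity (exponent Γ) M) : ((a ^ 2, 1, 1) : Mˣ × Mˣ × Mˣ) ∈ Γ := by
  rw [← map_fst_eq_rootsOfUnity hcyc] at ha
  obtain ⟨t, ht, rfl⟩ := ha
  exact sq_mk_one_one_mem hcyc hA ht

lemma eq_cube_of_odd [Finite Γ] [HasEnoughRootsOfUnity M (exponent Γ)]
    (hcyc : CyclicallyInvariant Γ) (hA : ∀ t ∈ Γ, (t.1⁻¹, t.2.1⁻¹, t.2.2) ∈ Γ)
    (hodd : Odd (exponent Γ)) : Γ = cube (rootsOfUnity (exponent Γ) M) :=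
  le_antisymm le_cube_rootsOfUnity_exponent <| cube_le_of_forall_mem hcyc fun x hx => by
    obtain ⟨a, ha, rfl⟩ := exists_sq_eq_of_odd hodd hx
    exact sq_mk_one_one_mem_of_mem_rootsOfUnity hcyc hA ha

end Torus

section AlgClosed

variable {K : Type*} [Field K] [IsAlgClosed K] [CharZero K] {Γ : Subgroup (Kˣ × Kˣ × Kˣ)}
  [Finite Γ]

theorem eq_cube_or_eq_cubeProdMem_or_eq_cubeDiagMod_of_even
    (hcyc : CyclicallyInvariant Γ) (hA : ∀ t ∈ Γ, (t.1⁻¹, t.2.1⁻¹, t.2.2) ∈ Γ)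
    (h2 : 2 ∣ exponent Γ) :
    Γ = cube (rootsOfUnity (exponent Γ) K) ∨
      Γ = cubeProdMem (rootsOfUnity (exponent Γ) K) (rootsOfUnity (exponent Γ / 2) K) ∨
      Γ = cubeDiagMod (rootsOfUnity (exponent Γ) K) (rootsOfUnity (exponent Γ / 2) K) := by
  set m := exponent Γ
  have hm : 2 * (m / 2) = m := Nat.mul_div_cancel' h2
  have hm0 : m ≠ 0 := exponent_ne_zero_of_finite
  have hsq : cube (rootsOfUnity (m / 2) K) ≤ Γ := cube_le_of_forall_mem hcyc fun x hx => by
    obtain ⟨a, ha, rfl⟩ := exists_sq_eq_of_mem_rootsOfUnity hx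
    exact sq_mk_one_one_mem_of_mem_rootsOfUnity hcyc hA (by rwa [hm] at ha)
  have hker : (powMonoidHom (m / 2)).ker ≤ Γ := fun t ht => hsq (by simpa [Prod.ext_iff] using ht)
  have hΓ : Γ = (Γ.map (powMonoidHom (m / 2))).comap (powMonoidHom (m / 2)) := by
    rw [Subgroup.comap_map_eq, sup_eq_left.2 hker]
  have hV : Γ.map (powMonoidHom (m / 2)) ≤ cube (rootsOfUnity 2 K) := by
    rw [Subgroup.map_le_iff_le_comap, comap_powMonoidHom_cube, comap_powMonoidHom_rootsOfUnity,
      Nat.div_mul_cancel h2]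
    exact le_cube_rootsOfUnity_exponent
  have hneg : ∃ v ∈ Γ.map (powMonoidHom (m / 2)), v.1 = -1 := by
    obtain ⟨x, hx, hxm⟩ := exists_mem_rootsOfUnity_pow_eq_neg_one (K := K) (n := m / 2) (by omega)
    rw [hm, ← map_fst_eq_rootsOfUnity hcyc] at hx
    obtain ⟨t, ht, rfl⟩ := hx
    exact ⟨_, ⟨t, ht, rfl⟩, hxm⟩
  rw [hΓ]
  rcases eq_cube_or_eq_cubeProdMem_or_eq_cubeDiagMod_rootsOfUnity_two hV
    (hcyc.map_powMonoidHom _) hneg with hV | hV | hV <;>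
  simp only [hV, comap_powMonoidHom_cube, comap_powMonoidHom_cubeProdMem,
    comap_powMonoidHom_cubeDiagMod, comap_powMonoidHom_rootsOfUnity, comap_powMonoidHom_bot,
    Nat.div_mul_cancel h2, true_or, or_true]

theorem eq_cube_or_eq_cubeProdMem_or_eq_cubeDiagMod
    (hcyc : CyclicallyInvariant Γ) (hA : ∀ t ∈ Γ, (t.1⁻¹, t.2.1⁻¹, t.2.2) ∈ Γ) :
    Γ = cube (rootsOfUnity (exponent Γ) K) ∨
      (2 ∣ exponent Γ ∧
        Γ = cubeProdMem (rootsOfUnity (exponent Γ) K) (rootsOfUnity (exponent Γ / 2) K)) ∨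
      (2 ∣ exponent Γ ∧
        Γ = cubeDiagMod (rootsOfUnity (exponent Γ) K) (rootsOfUnity (exponent Γ / 2) K)) := by
  by_cases h2 : 2 ∣ exponent Γ
  · rcases eq_cube_or_eq_cubeProdMem_or_eq_cubeDiagMod_of_even hcyc hA h2 with h | h | h
    exacts [Or.inl h, Or.inr (Or.inl ⟨h2, h⟩), Or.inr (Or.inr ⟨h2, h⟩)]
  · exact Or.inl (eq_cube_of_odd hcyc hA (Nat.odd_iff.2 (Nat.two_dvd_ne_zero.1 h2)))

end AlgClosed

theorem stmt11_general (Γ : Subgroup T3) [Finite Γ]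
    (hcyc : ∀ t : T3, t ∈ Γ → (t.2.2, t.1, t.2.1) ∈ Γ)
    (hA : ∀ t : T3, t ∈ Γ → (t.1⁻¹, t.2.1⁻¹, t.2.2) ∈ Γ) :
    ∃ n : ℕ, 0 < n ∧
      (Nonempty (Γ ≃* MZ n n n) ∨
       (2 ∣ n ∧ Nonempty (Γ ≃* MZ n n (n / 2))) ∨
       (2 ∣ n ∧ Nonempty (Γ ≃* MZ n (n / 2) (n / 2)))) := by
  set m := exponent Γ
  have hm : m ≠ 0 := exponent_ne_zero_of_finite
  let e := rootsOfUnityEquivZMod ℂ m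
  refine ⟨m, Nat.pos_of_ne_zero hm, ?_⟩
  rcases eq_cube_or_eq_cubeProdMem_or_eq_cubeDiagMod hcyc hA with h | ⟨h2, h⟩ | ⟨h2, h⟩
  · exact Or.inl ⟨(MulEquiv.subgroupCongr h).trans <| (cubeEquiv _).trans <|
      e.prodCongr (e.prodCongr e)⟩
  all_goals
    have : NeZero (m / 2) :=
      .of_pos (Nat.div_pos (Nat.le_of_dvd (Nat.pos_of_ne_zero hm) h2) two_pos)
    let e' := rootsOfUnityEquivZMod ℂ (m / 2)
    have hle := rootsOfUnity_le_of_dvd (M := ℂ) (Nat.div_dvd_of_dvd h2)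
  · exact Or.inr <| Or.inl ⟨h2, ⟨(MulEquiv.subgroupCongr h).trans <|
      (cubeProdMemEquiv hle).trans <| e.prodCongr (e.prodCongr e')⟩⟩
  · exact Or.inr <| Or.inr ⟨h2, ⟨(MulEquiv.subgroupCongr h).trans <|
      (cubeDiagModEquiv hle).trans <| e.prodCongr (e'.prodCongr e')⟩⟩

/-- A finite subgroup of the torus `(ℂ*)³` invariant under the `A₄`-action generated by
the cyclic permutation of coordinates and the sign-inversions
`(t₁,t₂,t₃) ↦ (t₁⁻¹,t₂⁻¹,t₃)`, `(t₁,t₂,t₃) ↦ (t₁⁻¹,t₂,t₃⁻¹)` is isomorphic to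
`μ_n³`, to `μ_n² × μ_{n/2}` (`n` even), or to `μ_n × μ_{n/2}²` (`n` even),
for some positive integer `n`. -/
theorem stmt11 (Γ : Subgroup T3) [Finite Γ]
    (hcyc : ∀ t : T3, t ∈ Γ → (t.2.2, t.1, t.2.1) ∈ Γ)
    (hA : ∀ t : T3, t ∈ Γ → (t.1⁻¹, t.2.1⁻¹, t.2.2) ∈ Γ)
    (hB : ∀ t : T3, t ∈ Γ → (t.1⁻¹, t.2.1, t.2.2⁻¹) ∈ Γ) :
    ∃ n : ℕ, 0 < n ∧
      (Nonempty (Γ ≃* MZ n n n) ∨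
       (2 ∣ n ∧ Nonempty (Γ ≃* MZ n n (n / 2))) ∨
       (2 ∣ n ∧ Nonempty (Γ ≃* MZ n (n / 2) (n / 2)))) :=
  stmt11_general Γ hcyc hA
end

section
/- Any finite subgroup Γ of (C*)^3 invariant under an A_4-action as above contains a subgroup Γ' isomorphic to μ_m^3 for some m, with index [Γ : Γ'] ≤ 16. -/
namespace Subgroup

section Group
variable {G : Type*} [Group G] {H K : Subgroup G}

theorem card_mul_relIndex (hHK : H ≤ K) : Nat.card H * H.relIndex K = Nat.card K := by
  simpa only [relIndex_bot_left] using relIndex_mul_relIndex ⊥ H K bot_le hHK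

theorem relIndex_le_of_card_le [Finite K] {c : ℕ} (hHK : H ≤ K)
    (hcard : Nat.card K ≤ c * Nat.card H) : H.relIndex K ≤ c := by
  have : Finite H := Finite.of_injective _ (inclusion_injective hHK)
  refine Nat.le_of_mul_le_mul_left ?_ (Nat.card_pos (α := H))
  rw [card_mul_relIndex hHK, mul_comm]
  exact hcard

def cube (H : Subgroup G) : Subgroup (G × G × G) := H.prod (H.prod H)

def cubeEquiv (H : Subgroup G) : H.cube ≃* H × H × H :=
  (prodEquiv H (H.prod H)).trans (MulEquiv.prodCongr (MulEquiv.refl H) (prodEquiv H H))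

instance [Finite H] : Finite H.cube := Finite.of_equiv _ H.cubeEquiv.toEquiv.symm

theorem card_cube (H : Subgroup G) : Nat.card H.cube = Nat.card H ^ 3 := by
  rw [Nat.card_congr H.cubeEquiv.toEquiv, Nat.card_prod, Nat.card_prod]
  ring

noncomputable def cubeEquivOfIsCyclic (H : Subgroup G) [IsCyclic H] :
    H.cube ≃* MZ (Nat.card H) (Nat.card H) (Nat.card H) :=
  let e := (zmodCyclicMulEquiv (inferInstance : IsCyclic H)).symm
  H.cubeEquiv.trans (e.prodCongr (e.prodCongr e))

end Group

section CommGroup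
variable {G : Type*} [CommGroup G]

def squares (H : Subgroup G) : Subgroup G := H.map (powMonoidHom 2)

theorem card_le_two_mul_card_squares (H : Subgroup G) [Finite H] [IsCyclic H] :
    Nat.card H ≤ 2 * Nat.card H.squares := by
  have hsq : H.squares = (powMonoidHom 2 : H →* H).range.map H.subtype := by
    rw [squares, MonoidHom.map_range]
    conv_lhs => rw [← H.range_subtype, MonoidHom.map_range]
    rfl
  rw [hsq, card_map_of_injective H.subtype_injective, IsCyclic.card_powMonoidHom_range]
  calc Nat.card H = (Nat.card H).gcd 2 * (Nat.card H / (Nat.card H).gcd 2) :=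
        (Nat.mul_div_cancel' (Nat.gcd_dvd_left _ _)).symm
    _ ≤ 2 * (Nat.card H / (Nat.card H).gcd 2) :=
        Nat.mul_le_mul_right _ (Nat.le_of_dvd two_pos (Nat.gcd_dvd_right _ _))

end CommGroup

end Subgroup

open Subgroup

variable {G : Type*} [CommGroup G]

/-- Invariance under the generators of the `A₄`-action on `G³`: the cyclic permutation of the
coordinates and the inversion of two of them. -/
structure IsA4Invariant (Γ : Subgroup (G × G × G)) : Prop where
  cycle_mem : ∀ t ∈ Γ, (t.2.2, t.1, t.2.1) ∈ Γ
  inv_fst_snd_mem : ∀ t ∈ Γ, (t.1⁻¹, t.2.1⁻¹, t.2.2) ∈ Γ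
  inv_fst_thd_mem : ∀ t ∈ Γ, (t.1⁻¹, t.2.1, t.2.2⁻¹) ∈ Γ

def coordinateGroup (Γ : Subgroup (G × G × G)) : Subgroup G := Γ.map (MonoidHom.fst G (G × G))

namespace IsA4Invariant
variable {Γ : Subgroup (G × G × G)} (hΓ : IsA4Invariant Γ)
include hΓ

theorem le_cube_coordinateGroup : Γ ≤ (coordinateGroup Γ).cube :=
  fun t ht =>
    ⟨⟨t, ht, rfl⟩, ⟨_, hΓ.cycle_mem _ (hΓ.cycle_mem t ht), rfl⟩, ⟨_, hΓ.cycle_mem t ht, rfl⟩⟩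

theorem pow_two_fst_mem {t : G × G × G} (ht : t ∈ Γ) : (t.1 ^ 2, 1, 1) ∈ Γ := by
  convert Γ.inv_mem (Γ.mul_mem (hΓ.inv_fst_snd_mem t ht) (hΓ.inv_fst_thd_mem t ht)) using 1
  simp [pow_two]

theorem cube_squares_le : (coordinateGroup Γ).squares.cube ≤ Γ := by
  have hQ : ∀ {x}, x ∈ (coordinateGroup Γ).squares → ((x, 1, 1) : G × G × G) ∈ Γ := by
    rintro _ ⟨_, ⟨t, ht, rfl⟩, rfl⟩
    exact hΓ.pow_two_fst_mem ht
  rintro ⟨a, b, c⟩ ⟨ha, hb, hc⟩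
  have hb' := hΓ.cycle_mem _ (hQ hb)
  have hc' := hΓ.cycle_mem _ (hΓ.cycle_mem _ (hQ hc))
  simpa using Γ.mul_mem (Γ.mul_mem (hQ ha) hb') hc'

end IsA4Invariant

theorem IsA4Invariant.exists_cube_relIndex_le_eight {K : Type*} [CommRing K] [IsDomain K]
    {Γ : Subgroup (Kˣ × Kˣ × Kˣ)} [Finite Γ] (hΓ : IsA4Invariant Γ) :
    ∃ m : ℕ, 0 < m ∧ ∃ Γ' : Subgroup (Kˣ × Kˣ × Kˣ), Γ' ≤ Γ ∧ Nonempty (Γ' ≃* MZ m m m) ∧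
      Γ'.relIndex Γ ≤ 8 := by
  set P := coordinateGroup Γ
  set Q := P.squares
  have : Finite P := Finite.Set.finite_image _ _
  have : Finite Q := Finite.Set.finite_image _ _
  refine ⟨Nat.card Q, Nat.card_pos, Q.cube, hΓ.cube_squares_le, ⟨Q.cubeEquivOfIsCyclic⟩,
    relIndex_le_of_card_le hΓ.cube_squares_le ?_⟩
  calc Nat.card Γ ≤ Nat.card P.cube := card_le_of_le hΓ.le_cube_coordinateGroup
    _ = Nat.card P ^ 3 := P.card_cube
    _ ≤ (2 * Nat.card Q) ^ 3 := Nat.pow_le_pow_left P.card_le_two_mul_card_squares 3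
    _ = 8 * Nat.card Q.cube := by rw [Q.card_cube]; ring

/-- Any finite subgroup `Γ` of `(ℂ*)³` invariant under the `A₄`-action (generated by the
cyclic permutation of coordinates and pairwise sign-inversions) contains a subgroup `Γ'`
isomorphic to `μ_m³` for some `m`, of index `[Γ : Γ'] ≤ 16`. -/
theorem stmt13 (Γ : Subgroup T3) [Finite Γ]
    (hcyc : ∀ t : T3, t ∈ Γ → (t.2.2, t.1, t.2.1) ∈ Γ)
    (hA : ∀ t : T3, t ∈ Γ → (t.1⁻¹, t.2.1⁻¹, t.2.2) ∈ Γ)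
    (hB : ∀ t : T3, t ∈ Γ → (t.1⁻¹, t.2.1, t.2.2⁻¹) ∈ Γ) :
    ∃ m : ℕ, 0 < m ∧
      ∃ Γ' : Subgroup T3, Γ' ≤ Γ ∧ Nonempty (Γ' ≃* MZ m m m) ∧
        Γ'.relIndex Γ ≤ 16 := by
  obtain ⟨m, hm, Γ', hle, e, hindex⟩ :=
    IsA4Invariant.exists_cube_relIndex_le_eight (K := ℂ) ⟨hcyc, hA, hB⟩
  exact ⟨m, hm, Γ', hle, e, hindex.trans (by norm_num)⟩
end

section
/- The hypersurface Y in P^1 × P^1 × P^1 × P^1 defined by u1 u2 u3 u4 = v1 v2 v3 v4 (in bihomogeneous coordinates [u_i : v_i]) is singular exactly at the six points where exactly two of the coordinates pairs are [0:1] and the other two are [1:0]. -/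
open MvPolynomial

/-- The multihomogeneous polynomial `u₁u₂u₃u₄ − v₁v₂v₃v₄` defining the divisor `Y₂₄`
of multidegree `(1,1,1,1)` in `ℙ¹ × ℙ¹ × ℙ¹ × ℙ¹`; the variable `Sum.inl i` is `u_i`
and `Sum.inr i` is `v_i`. -/
noncomputable def Fpoly : MvPolynomial (Fin 4 ⊕ Fin 4) ℂ :=
  (∏ i : Fin 4, X (Sum.inl i)) - ∏ i : Fin 4, X (Sum.inr i)

lemma deriv_char (u v : Fin 4 → ℂ) (i : Fin 4) :
    (eval (Sum.elim u v) (pderiv (Sum.inl i) Fpoly) = 0 ↔ ∃ j, j ≠ i ∧ u j = 0) ∧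
    (eval (Sum.elim u v) (pderiv (Sum.inr i) Fpoly) = 0 ↔ ∃ j, j ≠ i ∧ v j = 0) := by
  fin_cases i <;>
  · constructor <;>
    · simp only [Fpoly, Fin.prod_univ_four, map_sub, pderiv_mul, pderiv_X, map_add, map_mul,
        eval_X, Sum.elim_inl, Sum.elim_inr, Pi.single_apply, Fin.reduceEq, reduceCtorEq,
        Sum.inl.injEq, Sum.inr.injEq, map_zero, map_one, map_neg, Fin.mk_zero, Fin.mk_one,
        Fin.reduceFinMk, Fin.isValue,
        if_true, if_false, reduceIte, zero_mul, mul_zero, add_zero, zero_add, sub_zero,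
        zero_sub, neg_eq_zero, one_mul, mul_one, mul_eq_zero, or_assoc]
      constructor
      · rintro (h | h | h) <;>
          first
            | exact ⟨0, by decide, h⟩
            | exact ⟨1, by decide, h⟩
            | exact ⟨2, by decide, h⟩
            | exact ⟨3, by decide, h⟩
      · rintro ⟨j, hj, h⟩
        fin_cases j <;> simp_all

/-- The hypersurface `u₁u₂u₃u₄ = v₁v₂v₃v₄` in `(ℙ¹)⁴` is singular exactly at the six
points where exactly two of the coordinate pairs are `[0:1]` and the other two are
`[1:0]`: for a point of `(ℙ¹)⁴` (coordinates `([u_i : v_i])_i`, so `(u_i, v_i) ≠ (0,0)`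
for each `i`) lying on the hypersurface, all partial derivatives of the defining
polynomial vanish iff there is a two-element set `t ⊆ {1,2,3,4}` with `u_i = 0` exactly
for `i ∈ t` and `v_i = 0` exactly for `i ∉ t`. -/
theorem stmt15 (u v : Fin 4 → ℂ) (hnz : ∀ i, u i ≠ 0 ∨ v i ≠ 0)
    (hY : eval (Sum.elim u v) Fpoly = 0) :
    (∀ s : Fin 4 ⊕ Fin 4, eval (Sum.elim u v) (pderiv s Fpoly) = 0) ↔
      ∃ t : Finset (Fin 4), t.card = 2 ∧
        (∀ i, i ∈ t ↔ u i = 0) ∧ (∀ i, i ∉ t ↔ v i = 0) := by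
  constructor
  · intro h
    set t : Finset (Fin 4) := Finset.univ.filter (fun i => u i = 0) with ht
    set w : Finset (Fin 4) := Finset.univ.filter (fun i => v i = 0) with hw
    have hU : ∀ i : Fin 4, ∃ j, j ≠ i ∧ u j = 0 :=
      fun i => ((deriv_char u v i).1).mp (h (Sum.inl i))
    have hV : ∀ i : Fin 4, ∃ j, j ≠ i ∧ v j = 0 :=
      fun i => ((deriv_char u v i).2).mp (h (Sum.inr i))
    have ht2 : 2 ≤ t.card := by
      obtain ⟨j, -, hj⟩ := hU 0
      obtain ⟨k, hkj, hk⟩ := hU j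
      exact Finset.one_lt_card.mpr ⟨j, by simp [ht, hj], k, by simp [ht, hk], hkj.symm⟩
    have hw2 : 2 ≤ w.card := by
      obtain ⟨j, -, hj⟩ := hV 0
      obtain ⟨k, hkj, hk⟩ := hV j
      exact Finset.one_lt_card.mpr ⟨j, by simp [hw, hj], k, by simp [hw, hk], hkj.symm⟩
    have hdisj : Disjoint t w := by
      rw [Finset.disjoint_left]
      intro a hat haw
      simp [ht, hw] at hat haw
      rcases hnz a with h' | h' <;> [exact h' hat; exact h' haw]
    have hcard : t.card + w.card ≤ 4 := by
      rw [← Finset.card_union_of_disjoint hdisj]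
      simpa using Finset.card_le_univ (t ∪ w)
    have ht2' : t.card = 2 := by omega
    have hw2' : w.card = 2 := by omega
    have huniv : t ∪ w = Finset.univ := by
      apply Finset.eq_univ_of_card
      rw [Finset.card_union_of_disjoint hdisj]
      simp [ht2', hw2']
    refine ⟨t, ht2', fun i => by simp [ht], fun i => ?_⟩
    constructor
    · intro hi
      have : i ∈ t ∪ w := huniv ▸ Finset.mem_univ i
      rcases Finset.mem_union.mp this with h' | h'
      · exact absurd h' hi
      · simpa [hw] using h'
    · intro hvi hit
      exact (Finset.disjoint_left.mp hdisj hit) (by simp [hw, hvi])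
  · rintro ⟨t, htc, htu, htv⟩ s
    obtain ⟨a, b, hab, rfl⟩ := Finset.card_eq_two.mp htc
    have hua : u a = 0 := (htu a).mp (by simp)
    have hub : u b = 0 := (htu b).mp (by simp)
    have hexu : ∀ i : Fin 4, ∃ j, j ≠ i ∧ u j = 0 := by
      intro i
      by_cases hai : a = i
      · exact ⟨b, by rw [← hai]; exact fun h => hab h.symm, hub⟩
      · exact ⟨a, hai, hua⟩
    have hexv : ∀ i : Fin 4, ∃ j, j ≠ i ∧ v j = 0 := by
      intro i
      have h4 : ({a, b} : Finset (Fin 4)).card = 2 := htc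
      have hcompl : (({a, b} : Finset (Fin 4))ᶜ).card = 2 := by
        rw [Finset.card_compl, h4]; rfl
      obtain ⟨c, d, hcd, hcdeq⟩ := Finset.card_eq_two.mp hcompl
      have hvc : v c = 0 := (htv c).mp (Finset.mem_compl.mp
        (hcdeq ▸ (by simp : c ∈ ({c, d} : Finset (Fin 4)))))
      have hvd : v d = 0 := (htv d).mp (Finset.mem_compl.mp
        (hcdeq ▸ (by simp : d ∈ ({c, d} : Finset (Fin 4)))))
      by_cases hci : c = i
      · exact ⟨d, by rw [← hci]; exact fun h => hcd h.symm, hvd⟩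
      · exact ⟨c, hci, hvc⟩
    cases s with
    | inl i => exact ((deriv_char u v i).1).mpr (hexu i)
    | inr i => exact ((deriv_char u v i).2).mpr (hexv i)
end
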